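/- In a Shamir (n,k)-threshold scheme over a finite field F with |F| > n, for any set of at most k−1 shares, the conditional distribution of the secret given those shares equals its prior distribution; in particular, if the secret is uniform on F, it remains uniform conditioned on any k−1 shares. -/

import Mathlib

/-! The secret is the value at `0` of the random polynomial, so secret and shares in `J` are its
values at the `|J| + 1 ≤ k` distinct nodes `0` and `x j`. By Lagrange interpolation the linear map
sending a coefficient vector to these values is surjective, hence each of its fibers is a coset of
its kernel, which has dimension `k - (|J| + 1)` by rank-nullity. -/

open Polynomial

theorem LinearMap.natCard_fiber_of_surjective {K V W : Type*} [Field K] [Fintype K]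
    [AddCommGroup V] [Module K V] [FiniteDimensional K V] [AddCommGroup W] [Module K W]
    {f : V →ₗ[K] W} (hf : Function.Surjective f) (w : W) :
    Nat.card {v // f v = w} = Fintype.card K ^ (Module.finrank K V - Module.finrank K W) := by
  have hfiber : Nat.card {v // f v = w} = Nat.card (LinearMap.ker f) :=
    Nat.card_congr (f.toAddMonoidHom.fiberEquivKerOfSurjective hf w)
  have hrank := f.finrank_range_add_finrank_ker
  rw [LinearMap.range_eq_top.mpr hf, finrank_top] at hrank
  rw [hfiber, Module.natCard_eq_pow_finrank (K := K), Nat.card_eq_fintype_card]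
  congr 1
  omega

section CoeffEval

variable {F : Type*} [Field F]

def coeffEval (k : ℕ) {ι : Type*} (v : ι → F) : (Fin k → F) →ₗ[F] ι → F where
  toFun c i := ∑ m : Fin k, c m * v i ^ (m : ℕ)
  map_add' c d := by ext; simp [add_mul, Finset.sum_add_distrib]
  map_smul' a c := by ext; simp [mul_assoc, Finset.mul_sum]

theorem coeffEval_apply {k : ℕ} {ι : Type*} (v : ι → F) (c : Fin k → F) (i : ι) :
    coeffEval k v c i = ∑ m : Fin k, c m * v i ^ (m : ℕ) := rfl

theorem coeffEval_surjective {k : ℕ} {ι : Type*} [Fintype ι] {v : ι → F}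
    (hv : Function.Injective v) (hk : Fintype.card ι ≤ k) :
    Function.Surjective (coeffEval k v) := by
  classical
  intro r
  have hvs : Set.InjOn v (Finset.univ : Finset ι) := hv.injOn
  have hp : Lagrange.interpolate Finset.univ v r ∈ degreeLT F k := by
    rw [mem_degreeLT]
    exact (Lagrange.degree_interpolate_lt r hvs).trans_le (by simpa using hk)
  refine ⟨degreeLTEquiv F k ⟨_, hp⟩, funext fun i => ?_⟩
  rw [coeffEval_apply, ← eval_eq_sum_degreeLTEquiv hp]
  exact Lagrange.eval_interpolate_at_node r hvs (Finset.mem_univ i)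

theorem coeffEval_apply_of_eq_zero {k : ℕ} (hk : 1 ≤ k) {ι : Type*} {v : ι → F} {i : ι}
    (hi : v i = 0) (c : Fin k → F) : coeffEval k v c i = c ⟨0, hk⟩ := by
  rw [coeffEval_apply, hi, Finset.sum_eq_single ⟨0, hk⟩]
  · simp
  · intro m _ hm
    simp [Fin.ext_iff.not.mp hm]
  · simp

end CoeffEval

theorem shamir_confidentiality_general
    {F : Type*} [Field F] [Fintype F]
    (n k : ℕ) (hk : 1 ≤ k)
    (x : Fin n → F) (hx : Function.Injective x) (hx0 : ∀ i, x i ≠ 0)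
    (J : Finset (Fin n)) (hJ : J.card ≤ k - 1)
    (s : F) (y : Fin n → F) :
    Nat.card {c : Fin k → F //
        c ⟨0, hk⟩ = s ∧ ∀ j ∈ J, (∑ i : Fin k, c i * x j ^ (i : ℕ)) = y j}
      = Fintype.card F ^ (k - 1 - J.card) := by
  let nodes : Option J → F := Option.elim' 0 fun j => x j
  let shares : Option J → F := Option.elim' s fun j => y j
  have hnodes : Function.Injective nodes :=
    Option.injective_iff.2 ⟨hx.comp Subtype.val_injective, fun ⟨j, hj⟩ => hx0 j hj⟩
  have hcard : Fintype.card (Option J) = J.card + 1 := by simp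
  have hfiber : {c : Fin k → F //
        c ⟨0, hk⟩ = s ∧ ∀ j ∈ J, (∑ i : Fin k, c i * x j ^ (i : ℕ)) = y j}
      ≃ {c // coeffEval k nodes c = shares} := Equiv.subtypeEquivRight fun c => by
    rw [funext_iff, Option.forall, coeffEval_apply_of_eq_zero hk (v := nodes) (i := none) rfl,
      Subtype.forall]
    rfl
  rw [Nat.card_congr hfiber,
    LinearMap.natCard_fiber_of_surjective (coeffEval_surjective hnodes (by omega)),
    Module.finrank_fin_fun, Module.finrank_fintype_fun_eq_card, hcard]
  congr 1
  omega

/-- Shamir `(n,k)`-threshold confidentiality. A secret `s` is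
encoded as the constant term of a uniformly random polynomial of degree `< k`
(coefficient vector `c : Fin k → F`), with share `i` being the evaluation at a
fixed nonzero point `x i` (points pairwise distinct, `|F| > n`). For any subset
`J` of at most `k-1` shares and any prescribed share values `y`, the number of
polynomials consistent with secret `s` and shares `y` is `|F|^(k-1-|J|)`,
independently of `s` and `y`: hence the shares in `J` are uniformly
distributed and independent of the secret. -/
theorem shamir_confidentiality
    {F : Type*} [Field F] [Fintype F] [DecidableEq F]
    (n k : ℕ) (hk : 1 ≤ k) (hkn : k ≤ n)
    (hF : n < Fintype.card F)
    (x : Fin n → F) (hx : Function.Injective x) (hx0 : ∀ i, x i ≠ 0)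
    (J : Finset (Fin n)) (hJ : J.card ≤ k - 1)
    (s : F) (y : Fin n → F) :
    Nat.card {c : Fin k → F //
        c ⟨0, hk⟩ = s ∧ ∀ j ∈ J, (∑ i : Fin k, c i * x j ^ (i : ℕ)) = y j}
      = Fintype.card F ^ (k - 1 - J.card) :=
  shamir_confidentiality_general n k hk x hx hx0 J hJ s y
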